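/- arXiv:2003.13370 — 5 statements merged into one kernel-verified Lean document; each statement's English description precedes it below -/
import Mathlib

section
/- Let h : ℝ^d → {−1,1} be a classifier whose decision boundary DB(h) is such that for any x, δ with ‖δ‖₂ ≤ ε and h(x) ≠ h(x+δ) there exists k ∈ (0,1) with x + kδ ∈ DB(h). Then the critical region CR(h) = {x : ∃ δ, ‖δ‖₂ ≤ ε, h(x+δ) ≠ h(x)} equals the union over x₀ ∈ DB(h) of the open ℓ₂ balls β_ε(x₀) = {x : ‖x − x₀‖₂ < ε}, where DB(h) = {x : ∃ C > 0, ∀ 0 < ε' ≤ C, ∃ u ≠ 0 with ‖u‖₂ ≤ ε' and h(x+u) ≠ h(x)}. -/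
/-- The critical region of a binary classifier whose decision boundary is crossed along any
misclassifying perturbation segment equals the union of open `ℓ₂` balls of radius `ε`
centered at the points of the decision boundary. -/
theorem critical_region_eq_union_balls
    (d : ℕ) (h : EuclideanSpace ℝ (Fin d) → ℤ) (ε : ℝ)
    (DB : Set (EuclideanSpace ℝ (Fin d)))
    (hDB : DB = {x | ∃ C > (0 : ℝ), ∀ ε', 0 < ε' → ε' ≤ C →
      ∃ u : EuclideanSpace ℝ (Fin d), u ≠ 0 ∧ ‖u‖ ≤ ε' ∧ h (x + u) ≠ h x})
    (hcont : ∀ x δ : EuclideanSpace ℝ (Fin d), ‖δ‖ ≤ ε → h x ≠ h (x + δ) →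
      ∃ k : ℝ, 0 < k ∧ k < 1 ∧ x + k • δ ∈ DB) :
    {x : EuclideanSpace ℝ (Fin d) |
        ∃ δ : EuclideanSpace ℝ (Fin d), ‖δ‖ ≤ ε ∧ h (x + δ) ≠ h x} =
      ⋃ x₀ ∈ DB, {x : EuclideanSpace ℝ (Fin d) | ‖x - x₀‖ < ε} := by
  ext x
  simp only [Set.mem_setOf_eq, Set.mem_iUnion, exists_prop]
  constructor
  · rintro ⟨δ, hδ, hne⟩
    obtain ⟨k, hk0, hk1, hkDB⟩ := hcont x δ hδ (Ne.symm hne)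
    refine ⟨x + k • δ, hkDB, ?_⟩
    have hδ0 : δ ≠ 0 := by rintro rfl; simp at hne
    have hδpos : 0 < ‖δ‖ := norm_pos_iff.mpr hδ0
    have : ‖x - (x + k • δ)‖ = k * ‖δ‖ := by
      rw [sub_add_eq_sub_sub, sub_self, zero_sub, norm_neg, norm_smul,
        Real.norm_eq_abs, abs_of_pos hk0]
    rw [this]
    calc k * ‖δ‖ < 1 * ‖δ‖ := by nlinarith
      _ ≤ ε := by simpa using hδ
  · rintro ⟨x₀, hx₀, hx⟩
    rw [hDB] at hx₀
    obtain ⟨C, hC, hu⟩ := hx₀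
    set ε' := min C (ε - ‖x - x₀‖) with hε'
    have hε'pos : 0 < ε' := lt_min hC (by linarith)
    obtain ⟨u, hu0, hun, hune⟩ := hu ε' hε'pos (min_le_left _ _)
    by_cases hx0 : h x₀ = h x
    · refine ⟨x₀ + u - x, ?_, ?_⟩
      · calc ‖x₀ + u - x‖ = ‖(x₀ - x) + u‖ := by rw [add_sub_right_comm]
          _ ≤ ‖x₀ - x‖ + ‖u‖ := norm_add_le _ _
          _ ≤ ‖x₀ - x‖ + (ε - ‖x - x₀‖) := by linarith [min_le_right C (ε - ‖x - x₀‖), hun]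
          _ = ε := by rw [norm_sub_rev x₀ x]; ring
      · have : x + (x₀ + u - x) = x₀ + u := by abel
        rw [this, ← hx0]; exact hune
    · refine ⟨x₀ - x, ?_, ?_⟩
      · rw [norm_sub_rev]; exact le_of_lt hx
      · have : x + (x₀ - x) = x₀ := by abel
        rw [this]; exact fun hh => hx0 hh
end

section
/- In the uniform mixture Bernoulli(θ^{(1)}, θ^{(−1)}, t) with 0 < t < 1/2 and odd effective dimension k = ‖θ^{(1)} − θ^{(−1)}‖₀, the Bayes optimal classification error rate equals ∑_{i=0}^{⌊k/2⌋} C(k,i) (1/2 + t)^i (1/2 − t)^{k−i}. -/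
/-!
Write `p = 1/2 + t ≥ q = 1/2 - t`. Whatever the classifier, at each `x` it pays the mass of
the label it does not predict, so the best achievable error is `∑ₓ min_y P(x, y)`, and since
`p ^ (d - h) * q ^ h` decreases in `h` this minimum is `½ p ^ (d - M) q ^ M` with `M` the larger
of the distances from `x` to the two centres. Split the coordinates into the `k` where the centres
differ and the `d - k` where they agree: if `x` disagrees with `θ¹` in `a` of the former and `b`
of the latter, then `M = max a (k - a) + b`. The `b`-part sums to `(p + q) ^ (d - k) = 1`, and as
`k` is odd the `a`-part folds under `a ↦ k - a` onto twice the sum over `a ≤ ⌊k/2⌋`.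
-/

/-- Hamming distance between sign vectors (encoded as `Bool` vectors). -/
def ham {d : ℕ} (x y : Fin d → Bool) : ℕ :=
  (Finset.univ.filter fun i => x i ≠ y i).card

/-- Joint mass of the uniform mixture `Bernoulli(θ¹, θ⁻¹, t)`: `y` is uniform on
`{-1,1}` (encoded `true ↔ 1`), and given `y` each coordinate of `x` equals `θ^{(y)}_i`
with probability `1/2 + t`. -/
noncomputable def bernMass (d : ℕ) (θ₁ θₘ : Fin d → Bool) (t : ℝ)
    (z : (Fin d → Bool) × Bool) : ℝ :=
  (1/2) * (1/2 + t) ^ (d - ham z.1 (if z.2 then θ₁ else θₘ)) *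
    (1/2 - t) ^ (ham z.1 (if z.2 then θ₁ else θₘ))

/-- Clean (standard) error rate of a classifier on the Bernoulli mixture. -/
noncomputable def bernErr (d : ℕ) (θ₁ θₘ : Fin d → Bool) (t : ℝ)
    (h : (Fin d → Bool) → Bool) : ℝ :=
  ∑ z : (Fin d → Bool) × Bool, bernMass d θ₁ θₘ t z * (if h z.1 ≠ z.2 then 1 else 0)

open Finset

theorem ham_eq_hammingDist {d : ℕ} (x y : Fin d → Bool) : ham x y = hammingDist x y := rfl

section Hamming

variable {ι : Type*} [Fintype ι]

theorem hammingDist_piEquivPiSubtypeProd {β : ι → Type*} [∀ i, DecidableEq (β i)]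
    (p : ι → Prop) [DecidablePred p] (x y : ∀ i, β i) :
    hammingDist x y =
      hammingDist (Equiv.piEquivPiSubtypeProd p β x).1 (Equiv.piEquivPiSubtypeProd p β y).1 +
        hammingDist (Equiv.piEquivPiSubtypeProd p β x).2 (Equiv.piEquivPiSubtypeProd p β y).2 := by
  simp only [hammingDist, card_filter]
  exact (Fintype.sum_subtype_add_sum_subtype p _).symm

theorem hammingDist_not_right (x c : ι → Bool) :
    hammingDist x (fun i => !c i) = Fintype.card ι - hammingDist x c := by
  have := card_filter_add_card_filter_not (s := univ) (fun i => x i ≠ c i)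
  simp only [card_univ, not_not, ne_eq] at this
  simp only [hammingDist, ne_eq, Bool.not_eq_not]
  omega

theorem sum_hammingDist_eq_sum_choose {M : Type*} [AddCommMonoid M] [DecidableEq ι]
    (c : ι → Bool) (w : ℕ → M) :
    ∑ x : ι → Bool, w (hammingDist x c) =
      ∑ j ∈ range (Fintype.card ι + 1), (Fintype.card ι).choose j • w j := by
  have hbij : Function.Bijective fun x : ι → Bool => ({i | x i ≠ c i} : Finset ι) := by
    refine ⟨fun x x' h => funext fun i => ?_, fun s => ⟨fun i => xor (decide (i ∈ s)) (c i), ?_⟩⟩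
    · have := congrArg (i ∈ ·) h
      simp only [mem_filter, mem_univ, true_and, eq_iff_iff] at this
      cases hx : x i <;> cases hx' : x' i <;> cases c i <;> simp_all
    · ext i
      by_cases hi : i ∈ s <;> simp [hi]
  rw [Fintype.sum_bijective _ hbij (fun x => w (hammingDist x c)) (fun s => w #s) fun x => rfl,
    ← powerset_univ, sum_powerset_apply_card, card_univ]

theorem sum_hammingDist_pair {M : Type*} [AddCommMonoid M] [DecidableEq ι] (a b : ι → Bool)
    (F : ℕ → ℕ → M) :
    ∑ x : ι → Bool, F (hammingDist x a) (hammingDist x b) =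
      ∑ i ∈ range (hammingDist a b + 1), (hammingDist a b).choose i •
        ∑ j ∈ range (Fintype.card ι - hammingDist a b + 1),
          (Fintype.card ι - hammingDist a b).choose j • F (i + j) (hammingDist a b - i + j) := by
  set k := hammingDist a b
  set e := Equiv.piEquivPiSubtypeProd (fun i => a i ≠ b i) fun _ => Bool with he
  have hS : Fintype.card {i // a i ≠ b i} = k := Fintype.card_subtype _
  have hSc : Fintype.card {i // ¬a i ≠ b i} = Fintype.card ι - k := by
    rw [Fintype.card_subtype_compl, hS]
  have hb₁ : (e b).1 = fun i => !(e a).1 i := funext fun i => Bool.eq_not.mpr (Ne.symm i.2)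
  have hb₂ : (e b).2 = (e a).2 := funext fun i => (not_not.mp i.2).symm
  rw [← e.symm.sum_comp, Fintype.sum_prod_type]
  simp only [hammingDist_piEquivPiSubtypeProd (fun i => a i ≠ b i) (e.symm _), ← he]
  simp only [e.apply_symm_apply, hb₁, hb₂, hammingDist_not_right, hS]
  calc _ = ∑ u : {i // a i ≠ b i} → Bool, ∑ j ∈ range (Fintype.card ι - k + 1),
        (Fintype.card ι - k).choose j •
          F (hammingDist u (e a).1 + j) (k - hammingDist u (e a).1 + j) :=
        sum_congr rfl fun u _ => by
          rw [sum_hammingDist_eq_sum_choose (e a).2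
            fun j => F (hammingDist u (e a).1 + j) (k - hammingDist u (e a).1 + j), hSc]
    _ = _ := by
        rw [sum_hammingDist_eq_sum_choose (e a).1 fun i => ∑ j ∈ range (Fintype.card ι - k + 1),
          (Fintype.card ι - k).choose j • F (i + j) (k - i + j), hS]

end Hamming

theorem isLeast_misclassification_sum_min {X R : Type*} [Fintype X] [Semiring R] [LinearOrder R]
    [IsOrderedAddMonoid R] (f : X × Bool → R) :
    IsLeast {r | ∃ h : X → Bool, r = ∑ z, f z * (if h z.1 ≠ z.2 then 1 else 0)}
      (∑ x, min (f (x, true)) (f (x, false))) := by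
  have error_eq (h : X → Bool) :
      ∑ z, f z * (if h z.1 ≠ z.2 then 1 else 0) = ∑ x, f (x, !h x) := by
    rw [Fintype.sum_prod_type]
    refine sum_congr rfl fun x _ => ?_
    cases hx : h x <;> simp [hx]
  refine ⟨⟨fun x => decide (f (x, false) ≤ f (x, true)), ?_⟩, ?_⟩
  · rw [error_eq fun x => decide (f (x, false) ≤ f (x, true))]
    refine sum_congr rfl fun x _ => ?_
    by_cases hx : f (x, false) ≤ f (x, true)
    · simp [hx]
    · simp [hx, (not_le.mp hx).le]
  · rintro r ⟨h, rfl⟩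
    rw [error_eq]
    refine sum_le_sum fun x _ => ?_
    cases h x
    · exact min_le_left _ _
    · exact min_le_right _ _

section PowSubMulPow

variable {R : Type*} [CommSemiring R] [LinearOrder R] [IsOrderedRing R] {p q : R}

theorem pow_sub_mul_pow_le_pow_sub_mul_pow (hq : 0 ≤ q) (hqp : q ≤ p) {n a b : ℕ}
    (hab : a ≤ b) (hbn : b ≤ n) : p ^ (n - b) * q ^ b ≤ p ^ (n - a) * q ^ a := by
  obtain ⟨e, rfl⟩ := Nat.exists_eq_add_of_le hab
  calc p ^ (n - (a + e)) * q ^ (a + e) = p ^ (n - (a + e)) * q ^ a * q ^ e := by ring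
    _ ≤ p ^ (n - (a + e)) * q ^ a * p ^ e :=
      mul_le_mul_of_nonneg_left (pow_le_pow_left₀ hq hqp e)
        (mul_nonneg (pow_nonneg (hq.trans hqp) _) (pow_nonneg hq _))
    _ = p ^ (n - a) * q ^ a := by
      rw [show n - a = n - (a + e) + e by omega]
      ring

theorem min_pow_sub_mul_pow (hq : 0 ≤ q) (hqp : q ≤ p) {n a b : ℕ} (ha : a ≤ n) (hb : b ≤ n) :
    min (p ^ (n - a) * q ^ a) (p ^ (n - b) * q ^ b) = p ^ (n - max a b) * q ^ max a b := by
  rcases le_total a b with hab | hba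
  · rw [max_eq_right hab, min_eq_right (pow_sub_mul_pow_le_pow_sub_mul_pow hq hqp hab hb)]
  · rw [max_eq_left hba, min_eq_left (pow_sub_mul_pow_le_pow_sub_mul_pow hq hqp hba ha)]

end PowSubMulPow

theorem sum_range_choose_smul_max_of_odd {M : Type*} [AddCommMonoid M] {k : ℕ} (hk : Odd k)
    (g : ℕ → M) :
    ∑ a ∈ range (k + 1), k.choose a • g (max a (k - a)) =
      2 • ∑ i ∈ range (k / 2 + 1), k.choose i • g (k - i) := by
  obtain ⟨m, rfl⟩ := hk
  rw [show (2 * m + 1) / 2 = m by omega,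
    ← sum_range_add_sum_Ico _ (by omega : m + 1 ≤ 2 * m + 1 + 1), two_nsmul]
  congr 1
  · refine sum_congr rfl fun a ha => ?_
    rw [mem_range] at ha
    rw [max_eq_right (by omega)]
  · refine sum_nbij' (fun a => 2 * m + 1 - a) (fun i => 2 * m + 1 - i) ?_ ?_ ?_ ?_ ?_
    · intro a ha; simp only [mem_Ico, mem_range] at ha ⊢; omega
    · intro i hi; simp only [mem_Ico, mem_range] at hi ⊢; omega
    · intro a ha; simp only [mem_Ico] at ha; omega
    · intro i hi; simp only [mem_range] at hi; omega
    · intro a ha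
      simp only [mem_Ico] at ha
      rw [max_eq_left (by omega), Nat.sub_sub_self (by omega), Nat.choose_symm (by omega)]

theorem sum_range_choose_smul_pow_sub_mul_pow {R : Type*} [CommSemiring R] (p q : R) (n : ℕ) :
    ∑ j ∈ range (n + 1), n.choose j • (p ^ (n - j) * q ^ j) = (p + q) ^ n := by
  rw [add_comm p q, add_pow]
  exact sum_congr rfl fun j _ => by rw [nsmul_eq_mul]; ring

theorem sum_pow_sub_max_hammingDist_of_odd {ι R : Type*} [Fintype ι] [DecidableEq ι]
    [CommSemiring R] {p q : R} (hpq : p + q = 1) (a b : ι → Bool)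
    (hodd : Odd (hammingDist a b)) :
    ∑ x : ι → Bool, p ^ (Fintype.card ι - max (hammingDist x a) (hammingDist x b)) *
        q ^ max (hammingDist x a) (hammingDist x b) =
      2 * ∑ i ∈ range (hammingDist a b / 2 + 1),
        ((hammingDist a b).choose i : R) * p ^ i * q ^ (hammingDist a b - i) := by
  set k := hammingDist a b
  set n := Fintype.card ι
  have hkn : k ≤ n := hammingDist_le_card_fintype
  have split (i j : ℕ) (hi : i ≤ k) (hj : j ≤ n - k) :
      p ^ (n - max (i + j) (k - i + j)) * q ^ max (i + j) (k - i + j) =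
        p ^ (k - max i (k - i)) * q ^ max i (k - i) * (p ^ (n - k - j) * q ^ j) := by
    rw [max_add_add_right, show n - (max i (k - i) + j) = k - max i (k - i) + (n - k - j) by omega]
    ring
  have binomial : ∑ j ∈ range (n - k + 1), (n - k).choose j • (p ^ (n - k - j) * q ^ j) = 1 := by
    rw [sum_range_choose_smul_pow_sub_mul_pow, hpq, one_pow]
  rw [sum_hammingDist_pair a b fun h₁ h₂ => p ^ (n - max h₁ h₂) * q ^ max h₁ h₂]
  calc _ = ∑ i ∈ range (k + 1), k.choose i • (p ^ (k - max i (k - i)) * q ^ max i (k - i)) := by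
        refine sum_congr rfl fun i hi => ?_
        rw [← mul_one (p ^ _ * _), ← binomial, mul_sum]
        refine congrArg _ (sum_congr rfl fun j hj => ?_)
        rw [mem_range] at hi hj
        rw [split i j (by omega) (by omega), mul_smul_comm]
    _ = _ := by
        rw [sum_range_choose_smul_max_of_odd hodd fun m => p ^ (k - m) * q ^ m, nsmul_eq_mul,
          Nat.cast_ofNat]
        refine congrArg _ (sum_congr rfl fun i hi => ?_)
        rw [mem_range] at hi
        rw [Nat.sub_sub_self (by omega), nsmul_eq_mul, mul_assoc]

theorem min_bernMass {d : ℕ} (θ₁ θₘ : Fin d → Bool) {t : ℝ} (ht₀ : 0 ≤ t) (ht : t ≤ 1 / 2)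
    (x : Fin d → Bool) :
    min (bernMass d θ₁ θₘ t (x, true)) (bernMass d θ₁ θₘ t (x, false)) =
      1 / 2 * ((1 / 2 + t) ^ (d - max (hammingDist x θ₁) (hammingDist x θₘ)) *
        (1 / 2 - t) ^ max (hammingDist x θ₁) (hammingDist x θₘ)) := by
  have hdist (y : Fin d → Bool) : hammingDist x y ≤ d :=
    hammingDist_le_card_fintype.trans_eq (Fintype.card_fin d)
  simp only [bernMass, mul_assoc, if_true, Bool.false_eq_true, if_false, ham_eq_hammingDist]
  rw [← mul_min_of_nonneg _ _ (by norm_num : (0 : ℝ) ≤ 1 / 2),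
    min_pow_sub_mul_pow (by linarith) (by linarith) (hdist θ₁) (hdist θₘ)]

/-- For odd effective dimension `k`, the Bayes optimal error rate of the Bernoulli
mixture equals `∑_{i=0}^{⌊k/2⌋} C(k,i) (1/2+t)^i (1/2-t)^{k-i}`. -/
theorem bernoulli_bayes_error_odd
    (d : ℕ) (θ₁ θₘ : Fin d → Bool) (t : ℝ) (ht0 : 0 < t) (ht : t < 1/2)
    (k : ℕ) (hk : k = ham θ₁ θₘ) (hodd : Odd k) :
    IsLeast {r : ℝ | ∃ h : (Fin d → Bool) → Bool, r = bernErr d θ₁ θₘ t h}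
      (∑ i ∈ Finset.range (k / 2 + 1),
        (k.choose i : ℝ) * (1/2 + t) ^ i * (1/2 - t) ^ (k - i)) := by
  subst hk
  rw [ham_eq_hammingDist] at hodd ⊢
  have hsum := sum_pow_sub_max_hammingDist_of_odd (p := 1 / 2 + t) (q := 1 / 2 - t) (by ring)
    θ₁ θₘ hodd
  rw [Fintype.card_fin] at hsum
  have key := isLeast_misclassification_sum_min (bernMass d θ₁ θₘ t)
  rwa [sum_congr rfl fun x _ => min_bernMass θ₁ θₘ ht0.le ht.le x, ← mul_sum, hsum, ← mul_assoc,
    one_div_mul_cancel two_ne_zero, one_mul] at key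
end

section
/- In the uniform mixture Bernoulli(θ^{(1)}, θ^{(−1)}, t) with 0 < t < 1/2 and even effective dimension k = ‖θ^{(1)} − θ^{(−1)}‖₀, the Bayes optimal classification error rate equals ∑_{i=0}^{k/2} C(k,i)(1/2+t)^i(1/2−t)^{k−i} − (1/2) C(k, k/2) (1/2+t)^{k/2}(1/2−t)^{k/2}. -/
open Finset

section Aux

lemma card_filter_split' {d : ℕ} (P Q : Fin d → Prop) [DecidablePred P] [DecidablePred Q] :
    (univ.filter fun i : Fin d => Q i).card
      = (univ.filter fun i => P i ∧ Q i).card + (univ.filter fun i => ¬ P i ∧ Q i).card := by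
  have e1 : (univ.filter fun i : Fin d => P i ∧ Q i)
      = (univ.filter fun i : Fin d => Q i).filter P := by
    rw [Finset.filter_filter]; apply Finset.filter_congr; intro i _; tauto
  have e2 : (univ.filter fun i : Fin d => ¬ P i ∧ Q i)
      = (univ.filter fun i : Fin d => Q i).filter (fun i => ¬ P i) := by
    rw [Finset.filter_filter]; apply Finset.filter_congr; intro i _; tauto
  rw [e1, e2, Finset.card_filter_add_card_filter_not]

lemma card_filter_and_compl' {d : ℕ} (P Q : Fin d → Prop) [DecidablePred P] [DecidablePred Q] :
    (univ.filter fun i : Fin d => P i ∧ Q i).card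
      + (univ.filter fun i => P i ∧ ¬ Q i).card = (univ.filter fun i : Fin d => P i).card := by
  have e1 : (univ.filter fun i : Fin d => P i ∧ Q i)
      = (univ.filter fun i : Fin d => P i).filter Q := by
    rw [Finset.filter_filter]
  have e2 : (univ.filter fun i : Fin d => P i ∧ ¬ Q i)
      = (univ.filter fun i : Fin d => P i).filter (fun i => ¬ Q i) := by
    rw [Finset.filter_filter]
  rw [e1, e2, Finset.card_filter_add_card_filter_not]

/-- Equiv between Bool-valued functions and Finsets. -/
def boolFunEquivFinset (α : Type*) [Fintype α] [DecidableEq α] : (α → Bool) ≃ Finset α where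
  toFun u := Finset.univ.filter (fun i => u i = true)
  invFun W := fun i => decide (i ∈ W)
  left_inv := by intro u; funext i; simp
  right_inv := by intro W; ext i; simp

lemma sum_boolFun (α : Type*) [Fintype α] [DecidableEq α] (G : ℕ → ℝ) :
    ∑ u : α → Bool, G ((Finset.univ.filter (fun i => u i = true)).card)
      = ∑ a ∈ range (Fintype.card α + 1), (Fintype.card α).choose a * G a := by
  rw [← Equiv.sum_comp (boolFunEquivFinset α).symm
        (fun u => G ((Finset.univ.filter (fun i => u i = true)).card))]
  have : ∀ W : Finset α,
      (Finset.univ.filter (fun i => ((boolFunEquivFinset α).symm W) i = true)).card = W.card := by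
    intro W
    congr 1
    ext i; simp [boolFunEquivFinset]
  simp_rw [this]
  rw [← Finset.powerset_univ, Finset.sum_powerset_apply_card]
  simp [Finset.card_univ, nsmul_eq_mul]

def splitEquiv {d : ℕ} (P : Fin d → Prop) [DecidablePred P] :
    (({i // P i} → Bool) × ({i // ¬ P i} → Bool)) ≃ (Fin d → Bool) where
  toFun uv := fun i => if h : P i then uv.1 ⟨i, h⟩ else uv.2 ⟨i, h⟩
  invFun w := (fun j => w j.1, fun j => w j.1)
  left_inv := by
    rintro ⟨u, v⟩
    refine Prod.ext ?_ ?_ <;> funext j <;> simp [j.2]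
  right_inv := by
    intro w; funext i; by_cases h : P i <;> simp [h]

lemma card_split_left {d : ℕ} (P : Fin d → Prop) [DecidablePred P]
    (u : {i // P i} → Bool) (v : {i // ¬ P i} → Bool) :
    (Finset.univ.filter (fun i => P i ∧ (splitEquiv P (u, v)) i = true)).card
      = (Finset.univ.filter (fun j => u j = true)).card := by
  refine Finset.card_bij' (fun i hi => (⟨i, (Finset.mem_filter.1 hi).2.1⟩ : {i // P i}))
    (fun j _ => j.1) (fun i hi => ?_) (fun j hj => ?_) (fun _ _ => rfl) (fun _ _ => rfl)
  · have h := (Finset.mem_filter.1 hi).2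
    refine Finset.mem_filter.2 ⟨Finset.mem_univ _, ?_⟩
    simpa [splitEquiv, h.1] using h.2
  · refine Finset.mem_filter.2 ⟨Finset.mem_univ _, j.2, ?_⟩
    have := (Finset.mem_filter.1 hj).2
    simpa [splitEquiv, j.2] using this

lemma card_split_right {d : ℕ} (P : Fin d → Prop) [DecidablePred P]
    (u : {i // P i} → Bool) (v : {i // ¬ P i} → Bool) :
    (Finset.univ.filter (fun i => ¬ P i ∧ (splitEquiv P (u, v)) i = true)).card
      = (Finset.univ.filter (fun j => v j = true)).card := by
  refine Finset.card_bij' (fun i hi => (⟨i, (Finset.mem_filter.1 hi).2.1⟩ : {i // ¬ P i}))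
    (fun j _ => j.1) (fun i hi => ?_) (fun j hj => ?_) (fun _ _ => rfl) (fun _ _ => rfl)
  · have h := (Finset.mem_filter.1 hi).2
    refine Finset.mem_filter.2 ⟨Finset.mem_univ _, ?_⟩
    simpa [splitEquiv, h.1] using h.2
  · refine Finset.mem_filter.2 ⟨Finset.mem_univ _, j.2, ?_⟩
    have := (Finset.mem_filter.1 hj).2
    simpa [splitEquiv, j.2] using this

lemma master_count {d : ℕ} (P : Fin d → Prop) [DecidablePred P] (G : ℕ → ℕ → ℝ)
    (k : ℕ) (hk : k = (univ.filter fun i : Fin d => P i).card) :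
    ∑ w : Fin d → Bool,
      G ((univ.filter fun i => P i ∧ w i = true).card)
        ((univ.filter fun i => ¬ P i ∧ w i = true).card)
      = ∑ a ∈ range (k + 1), ∑ c ∈ range ((d - k) + 1),
          (k.choose a : ℝ) * ((d - k).choose c) * G a c := by
  have hcard1 : Fintype.card {i // P i} = k := by rw [Fintype.card_subtype, hk]
  have hcard2 : Fintype.card {i // ¬ P i} = d - k := by
    rw [Fintype.card_subtype]
    have h := Finset.card_filter_add_card_filter_not (s := (univ : Finset (Fin d)))
      (p := P)
    rw [Finset.card_univ, Fintype.card_fin] at h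
    have hk' : k = (univ.filter P).card := hk
    omega
  rw [← Equiv.sum_comp (splitEquiv P)
    (fun w => G ((univ.filter fun i => P i ∧ w i = true).card)
      ((univ.filter fun i => ¬ P i ∧ w i = true).card)), Fintype.sum_prod_type]
  simp only [card_split_left, card_split_right]
  calc ∑ u : {i // P i} → Bool, ∑ v : {i // ¬ P i} → Bool,
        G ((univ.filter fun j => u j = true).card) ((univ.filter fun j => v j = true).card)
      = ∑ u : {i // P i} → Bool, ∑ c ∈ range ((d - k) + 1),
          ((d - k).choose c : ℝ) * G ((univ.filter fun j => u j = true).card) c := by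
        refine Fintype.sum_congr _ _ (fun u => ?_)
        rw [sum_boolFun _ (fun c => G ((univ.filter fun j => u j = true).card) c), hcard2]
    _ = ∑ a ∈ range (k + 1), (k.choose a : ℝ) *
          ∑ c ∈ range ((d - k) + 1), ((d - k).choose c : ℝ) * G a c := by
        rw [sum_boolFun _ (fun a => ∑ c ∈ range ((d - k) + 1), ((d - k).choose c : ℝ) * G a c),
          hcard1]
    _ = _ := by
        refine Finset.sum_congr rfl (fun a _ => ?_)
        rw [Finset.mul_sum]
        refine Finset.sum_congr rfl (fun c _ => ?_)
        ring

lemma pow_anti_exp {p q : ℝ} (hq : 0 ≤ q) (hqp : q ≤ p) {m₁ m₂ D : ℕ}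
    (h12 : m₁ ≤ m₂) (h2 : m₂ ≤ D) :
    p ^ (D - m₂) * q ^ m₂ ≤ p ^ (D - m₁) * q ^ m₁ := by
  have hp : 0 ≤ p := le_trans hq hqp
  calc p ^ (D - m₂) * q ^ m₂ = p ^ (D - m₂) * q ^ (m₂ - m₁) * q ^ m₁ := by
        rw [mul_assoc, ← pow_add]; congr 2; omega
    _ ≤ p ^ (D - m₂) * p ^ (m₂ - m₁) * q ^ m₁ := by
        refine mul_le_mul_of_nonneg_right ?_ (pow_nonneg hq _)
        exact mul_le_mul_of_nonneg_left (pow_le_pow_left₀ hq hqp _) (pow_nonneg hp _)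
    _ = p ^ (D - m₁) * q ^ m₁ := by
        rw [← pow_add, show D - m₂ + (m₂ - m₁) = D - m₁ by omega]

lemma final_sum (p q : ℝ) (m k : ℕ) (hm : k = m + m) :
    ∑ a ∈ range (k + 1),
        (k.choose a : ℝ) * (1/2 * p ^ (k - max a (k - a)) * q ^ (max a (k - a)))
      = (∑ i ∈ range (m + 1), (k.choose i : ℝ) * p ^ i * q ^ (k - i))
        - 1/2 * (k.choose m : ℝ) * p ^ m * q ^ m := by
  set U : ℕ → ℝ := fun i => (k.choose i : ℝ) * p ^ i * q ^ (k - i) with hU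
  have key : ∑ a ∈ range (k + 1),
      (k.choose a : ℝ) * (p ^ (k - max a (k - a)) * q ^ (max a (k - a)))
      = ∑ i ∈ range (m + 1), U i + ∑ i ∈ range m, U i := by
    rw [range_eq_Ico, ← Finset.sum_Ico_consecutive _ (Nat.zero_le (m + 1))
      (by omega : m + 1 ≤ k + 1)]
    congr 1
    · rw [← range_eq_Ico]
      refine Finset.sum_congr rfl (fun a ha => ?_)
      have ha' : a ≤ m := by have := Finset.mem_range.1 ha; omega
      have h1 : max a (k - a) = k - a := max_eq_right (by omega)
      rw [h1, show k - (k - a) = a by omega, hU]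
      ring
    · have h2 : ∑ a ∈ Ico (m + 1) (k + 1),
          (k.choose a : ℝ) * (p ^ (k - max a (k - a)) * q ^ (max a (k - a)))
          = ∑ a ∈ Ico (m + 1) (k + 1), U (k - a) := by
        refine Finset.sum_congr rfl (fun a ha => ?_)
        have ha' := Finset.mem_Ico.1 ha
        have h3 : max a (k - a) = a := max_eq_left (by omega)
        rw [h3, hU]
        simp only
        rw [show k.choose (k - a) = k.choose a from Nat.choose_symm (by omega),
          show k - (k - a) = a by omega]
        ring
      rw [h2, Finset.sum_Ico_reflect U (m + 1) (le_refl (k + 1)),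
        show k + 1 - (k + 1) = 0 by omega, show k + 1 - (m + 1) = m by omega, ← range_eq_Ico]
  have hhalf : ∑ a ∈ range (k + 1),
      (k.choose a : ℝ) * (1/2 * p ^ (k - max a (k - a)) * q ^ (max a (k - a)))
      = 1/2 * ∑ a ∈ range (k + 1),
          (k.choose a : ℝ) * (p ^ (k - max a (k - a)) * q ^ (max a (k - a))) := by
    rw [Finset.mul_sum]
    exact Finset.sum_congr rfl (fun a _ => by ring)
  rw [hhalf, key, sum_range_succ]
  have hkm : k - m = m := by omega
  simp only [hU]
  rw [hkm]
  ring

end Aux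

/-- For even effective dimension `k`, the Bayes optimal error rate of the Bernoulli
mixture equals
`∑_{i=0}^{k/2} C(k,i)(1/2+t)^i(1/2-t)^{k-i} - (1/2) C(k,k/2)(1/2+t)^{k/2}(1/2-t)^{k/2}`. -/
theorem bernoulli_bayes_error_even
    (d : ℕ) (θ₁ θₘ : Fin d → Bool) (t : ℝ) (ht0 : 0 < t) (ht : t < 1/2)
    (k : ℕ) (hk : k = ham θ₁ θₘ) (heven : Even k) :
    IsLeast {r : ℝ | ∃ h : (Fin d → Bool) → Bool, r = bernErr d θ₁ θₘ t h}
      ((∑ i ∈ Finset.range (k / 2 + 1),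
          (k.choose i : ℝ) * (1/2 + t) ^ i * (1/2 - t) ^ (k - i)) -
        (1/2) * (k.choose (k / 2) : ℝ) * (1/2 + t) ^ (k / 2) * (1/2 - t) ^ (k / 2)) := by
  classical
  set p : ℝ := 1/2 + t with hp_def
  set q : ℝ := 1/2 - t with hq_def
  have hq0 : (0:ℝ) < q := by rw [hq_def]; linarith
  have hp0 : (0:ℝ) < p := by rw [hp_def]; linarith
  have hqp : q ≤ p := by rw [hp_def, hq_def]; linarith
  have hpq : q + p = 1 := by rw [hp_def, hq_def]; ring
  have hamle : ∀ x y : Fin d → Bool, ham x y ≤ d := by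
    intro x y
    refine (Finset.card_filter_le _ _).trans ?_
    simp
  have massT : ∀ x, bernMass d θ₁ θₘ t (x, true)
      = 1/2 * p ^ (d - ham x θ₁) * q ^ (ham x θ₁) := fun x => rfl
  have massF : ∀ x, bernMass d θ₁ θₘ t (x, false)
      = 1/2 * p ^ (d - ham x θₘ) * q ^ (ham x θₘ) := fun x => rfl
  have minmass : ∀ x, min (bernMass d θ₁ θₘ t (x, true)) (bernMass d θ₁ θₘ t (x, false))
      = 1/2 * p ^ (d - max (ham x θ₁) (ham x θₘ)) * q ^ (max (ham x θ₁) (ham x θₘ)) := by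
    intro x
    rcases le_total (ham x θ₁) (ham x θₘ) with h | h
    · rw [max_eq_right h, massT, massF]
      rw [min_eq_right]
      rw [mul_assoc, mul_assoc]
      exact mul_le_mul_of_nonneg_left (pow_anti_exp hq0.le hqp h (hamle x θₘ)) (by norm_num)
    · rw [max_eq_left h, massT, massF]
      rw [min_eq_left]
      rw [mul_assoc, mul_assoc]
      exact mul_le_mul_of_nonneg_left (pow_anti_exp hq0.le hqp h (hamle x θ₁)) (by norm_num)
  have herr : ∀ hcl : (Fin d → Bool) → Bool, bernErr d θ₁ θₘ t hcl
      = ∑ x : Fin d → Bool,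
          (bernMass d θ₁ θₘ t (x, true) * (if hcl x ≠ true then 1 else 0)
            + bernMass d θ₁ θₘ t (x, false) * (if hcl x ≠ false then 1 else 0)) := by
    intro hcl
    rw [bernErr, Fintype.sum_prod_type]
    exact Finset.sum_congr rfl fun x _ => by rw [Fintype.sum_bool]
  -- The central computation: the sum of pointwise minima equals the claimed value.
  have hsum : ∑ x : Fin d → Bool,
      min (bernMass d θ₁ θₘ t (x, true)) (bernMass d θ₁ θₘ t (x, false))
      = (∑ i ∈ Finset.range (k / 2 + 1),
          (k.choose i : ℝ) * p ^ i * q ^ (k - i))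
        - 1/2 * (k.choose (k / 2) : ℝ) * p ^ (k / 2) * q ^ (k / 2) := by
    simp only [minmass]
    set dv : Fin d → Bool := fun i => θ₁ i != θₘ i with hdv
    set P : Fin d → Prop := fun i => dv i = true with hP
    have hkP : k = (univ.filter fun i : Fin d => P i).card := by
      rw [hk, ham]
      congr 1
      apply Finset.filter_congr
      intro i _
      simp only [hP, hdv]
      cases θ₁ i <;> cases θₘ i <;> simp
    have hkd : k ≤ d := by
      rw [hkP]
      refine (Finset.card_filter_le _ _).trans ?_
      simp
    -- change of variables: `w i = (x i != θ₁ i)`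
    let xe : (Fin d → Bool) ≃ (Fin d → Bool) :=
      ⟨fun x i => x i != θ₁ i, fun w i => w i != θ₁ i,
        fun x => by
          funext i
          show ((x i != θ₁ i) != θ₁ i) = x i
          cases x i <;> cases θ₁ i <;> rfl,
        fun w => by
          funext i
          show ((w i != θ₁ i) != θ₁ i) = w i
          cases w i <;> cases θ₁ i <;> rfl⟩
    have step1 : ∑ x : Fin d → Bool,
        1/2 * p ^ (d - max (ham x θ₁) (ham x θₘ)) * q ^ (max (ham x θ₁) (ham x θₘ))
        = ∑ w : Fin d → Bool,
            1/2 * p ^ (d - max ((univ.filter fun i => w i = true).card)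
                ((univ.filter fun i => (w i != dv i) = true).card))
              * q ^ (max ((univ.filter fun i => w i = true).card)
                ((univ.filter fun i => (w i != dv i) = true).card)) := by
      rw [← Equiv.sum_comp xe (fun w =>
        1/2 * p ^ (d - max ((univ.filter fun i => w i = true).card)
            ((univ.filter fun i => (w i != dv i) = true).card))
          * q ^ (max ((univ.filter fun i => w i = true).card)
            ((univ.filter fun i => (w i != dv i) = true).card)))]
      refine Fintype.sum_congr _ _ (fun x => ?_)
      have e1 : (univ.filter fun i => (xe x) i = true).card = ham x θ₁ := by
        rw [ham]
        congr 1
        apply Finset.filter_congr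
        intro i _
        show ((x i != θ₁ i) = true) ↔ _
        cases x i <;> cases θ₁ i <;> simp
      have e2 : (univ.filter fun i => ((xe x) i != dv i) = true).card = ham x θₘ := by
        rw [ham]
        congr 1
        apply Finset.filter_congr
        intro i _
        show (((x i != θ₁ i) != dv i) = true) ↔ _
        simp only [hdv]
        cases x i <;> cases θ₁ i <;> cases θₘ i <;> simp
      rw [e1, e2]
    rw [step1]
    have count1 : ∀ w : Fin d → Bool,
        (univ.filter fun i => w i = true).card
        = (univ.filter fun i => P i ∧ w i = true).card
          + (univ.filter fun i => ¬ P i ∧ w i = true).card :=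
      fun w => card_filter_split' P (fun i => w i = true)
    have count2 : ∀ w : Fin d → Bool,
        (univ.filter fun i => (w i != dv i) = true).card
        = (k - (univ.filter fun i => P i ∧ w i = true).card)
          + (univ.filter fun i => ¬ P i ∧ w i = true).card := by
      intro w
      rw [card_filter_split' P (fun i => (w i != dv i) = true)]
      have e3 : (univ.filter fun i => P i ∧ (w i != dv i) = true)
          = (univ.filter fun i => P i ∧ ¬ (w i = true)) := by
        apply Finset.filter_congr
        intro i _
        simp only [hP]
        cases hdvi : dv i <;> cases hwi : w i <;> simp [hdvi, hwi]
      have e4 : (univ.filter fun i => ¬ P i ∧ (w i != dv i) = true)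
          = (univ.filter fun i => ¬ P i ∧ w i = true) := by
        apply Finset.filter_congr
        intro i _
        simp only [hP]
        cases hdvi : dv i <;> cases hwi : w i <;> simp [hdvi, hwi]
      rw [e3, e4]
      have e5 := card_filter_and_compl' P (fun i => w i = true)
      omega
    have step2 : ∑ w : Fin d → Bool,
        1/2 * p ^ (d - max ((univ.filter fun i => w i = true).card)
            ((univ.filter fun i => (w i != dv i) = true).card))
          * q ^ (max ((univ.filter fun i => w i = true).card)
            ((univ.filter fun i => (w i != dv i) = true).card))
        = ∑ a ∈ range (k + 1), ∑ c ∈ range ((d - k) + 1),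
            (k.choose a : ℝ) * ((d - k).choose c) *
              (1/2 * p ^ (d - max (a + c) (k - a + c)) * q ^ (max (a + c) (k - a + c))) := by
      rw [← master_count P
        (fun a c => 1/2 * p ^ (d - max (a + c) (k - a + c)) * q ^ (max (a + c) (k - a + c)))
        k hkP]
      refine Fintype.sum_congr _ _ (fun w => ?_)
      rw [count1 w, count2 w]
    rw [step2]
    have inner : ∀ a ∈ range (k + 1),
        ∑ c ∈ range ((d - k) + 1),
            (k.choose a : ℝ) * ((d - k).choose c) *
              (1/2 * p ^ (d - max (a + c) (k - a + c)) * q ^ (max (a + c) (k - a + c)))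
        = (k.choose a : ℝ) * (1/2 * p ^ (k - max a (k - a)) * q ^ (max a (k - a))) := by
      intro a ha
      have haa : a ≤ k := by have := Finset.mem_range.1 ha; omega
      have hAk : max a (k - a) ≤ k := max_le haa (Nat.sub_le k a)
      have hbin : ∑ c ∈ range ((d - k) + 1),
          ((d - k).choose c : ℝ) * (q ^ c * p ^ (d - k - c)) = 1 := by
        calc ∑ c ∈ range ((d - k) + 1), ((d - k).choose c : ℝ) * (q ^ c * p ^ (d - k - c))
            = ∑ c ∈ range ((d - k) + 1), q ^ c * p ^ (d - k - c) * ((d - k).choose c : ℝ) :=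
              Finset.sum_congr rfl (fun c _ => by ring)
          _ = (q + p) ^ (d - k) := (add_pow q p (d - k)).symm
          _ = 1 := by rw [hpq, one_pow]
      calc ∑ c ∈ range ((d - k) + 1),
            (k.choose a : ℝ) * ((d - k).choose c) *
              (1/2 * p ^ (d - max (a + c) (k - a + c)) * q ^ (max (a + c) (k - a + c)))
          = ∑ c ∈ range ((d - k) + 1),
              ((k.choose a : ℝ) * (1/2 * p ^ (k - max a (k - a)) * q ^ (max a (k - a)))) *
                (((d - k).choose c : ℝ) * (q ^ c * p ^ (d - k - c))) := by
            refine Finset.sum_congr rfl (fun c hc => ?_)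
            have hcc : c ≤ d - k := by have := Finset.mem_range.1 hc; omega
            rw [max_add_add_right,
              show d - (max a (k - a) + c) = (k - max a (k - a)) + (d - k - c) by omega,
              pow_add, pow_add]
            ring
        _ = ((k.choose a : ℝ) * (1/2 * p ^ (k - max a (k - a)) * q ^ (max a (k - a)))) *
              ∑ c ∈ range ((d - k) + 1), ((d - k).choose c : ℝ) * (q ^ c * p ^ (d - k - c)) := by
            rw [← Finset.mul_sum]
        _ = _ := by rw [hbin, mul_one]
    rw [Finset.sum_congr rfl inner]
    obtain ⟨m, hm⟩ := heven
    rw [show k / 2 = m by omega]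
    exact final_sum p q m k hm
  constructor
  · -- membership: the Bayes classifier attains the value
    refine ⟨fun x => decide (bernMass d θ₁ θₘ t (x, false) ≤ bernMass d θ₁ θₘ t (x, true)), ?_⟩
    rw [herr, ← hsum]
    refine Finset.sum_congr rfl fun x _ => ?_
    by_cases hle : bernMass d θ₁ θₘ t (x, false) ≤ bernMass d θ₁ θₘ t (x, true)
    · rw [min_eq_right hle]
      simp [hle]
    · rw [min_eq_left (le_of_not_ge hle)]
      simp [hle]
  · -- lower bound
    rintro r ⟨hcl, rfl⟩
    rw [herr, ← hsum]
    refine Finset.sum_le_sum fun x _ => ?_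
    cases hb : hcl x
    · refine le_trans (min_le_left _ _) ?_
      simp [hb]
    · refine le_trans (min_le_right _ _) ?_
      simp [hb]
end

section
/- Consider the mixture Bernoulli(θ^{(1)}, θ^{(−1)}, t) on {−1,1}^d with 0 < t < 1/2, viewed as a distribution on ℝ^d, under ℓ∞ perturbations of size 0 ≤ ε < 1. Define T(x) = (sign(x₁),…,sign(x_d)) and h(x) = h*(T(x)), where h* is the Bayes optimal classifier on clean data. Then R^{adv}_{∞,ε}(h) = R(h*), i.e., the adversarial error of h equals the Bayes error, and h is an (∞,ε)-optimal robust classifier. -/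
/-- Embedding of sign vectors into `ℝ^d` (`true ↦ 1`, `false ↦ -1`). -/
noncomputable def emb {d : ℕ} (x : Fin d → Bool) : Fin d → ℝ :=
  fun i => if x i then 1 else -1

open scoped Classical in
/-- Adversarial error rate on the Bernoulli mixture (viewed on `ℝ^d`) under `ℓ∞`
perturbations of size `ε`; the `ℓ∞` norm is the sup norm on `Fin d → ℝ`. -/
noncomputable def bernAdvErr (d : ℕ) (θ₁ θₘ : Fin d → Bool) (t ε : ℝ)
    (h : (Fin d → ℝ) → Bool) : ℝ :=
  ∑ z : (Fin d → Bool) × Bool, bernMass d θ₁ θₘ t z *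
    (if ∃ δ : Fin d → ℝ, ‖δ‖ ≤ ε ∧ h (emb z.1 + δ) ≠ z.2 then 1 else 0)

/-- Coordinatewise sign map `T(x) = (sign x₁, …, sign x_d)` with `sign r = 1 ↔ r ≥ 0`. -/
noncomputable def signMap {d : ℕ} (x : Fin d → ℝ) : Fin d → Bool :=
  fun i => decide (0 ≤ x i)

/-- For `0 ≤ ε < 1`, composing a Bayes optimal classifier `h*` (on clean sign vectors)
with the coordinatewise sign map yields a classifier whose `ℓ∞`-adversarial error equals
the Bayes error, and which is `(∞, ε)`-optimally robust. -/
theorem bernoulli_linf_optimal_robust_small_eps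
    (d : ℕ) (θ₁ θₘ : Fin d → Bool) (t : ℝ) (ht0 : 0 < t) (ht : t < 1/2)
    (ε : ℝ) (hε0 : 0 ≤ ε) (hε : ε < 1)
    (hstar : (Fin d → Bool) → Bool)
    (hopt : ∀ g : (Fin d → Bool) → Bool, bernErr d θ₁ θₘ t hstar ≤ bernErr d θ₁ θₘ t g) :
    bernAdvErr d θ₁ θₘ t ε (fun x => hstar (signMap x)) = bernErr d θ₁ θₘ t hstar ∧
    (∀ g : (Fin d → ℝ) → Bool,
      bernAdvErr d θ₁ θₘ t ε (fun x => hstar (signMap x)) ≤ bernAdvErr d θ₁ θₘ t ε g) := by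
  classical
  have hsign : ∀ (x : Fin d → Bool) (δ : Fin d → ℝ), ‖δ‖ ≤ ε → signMap (emb x + δ) = x := by
    intro x δ hδ
    funext i
    have hi : |δ i| ≤ ε := le_trans (norm_le_pi_norm δ i) hδ
    have h1 : -ε ≤ δ i := neg_le_of_abs_le hi
    have h2 : δ i ≤ ε := le_of_abs_le hi
    simp only [signMap, emb, Pi.add_apply]
    by_cases hx : x i <;> simp [hx] <;> linarith
  have hmass : ∀ z, 0 ≤ bernMass d θ₁ θₘ t z := by
    intro z
    unfold bernMass
    have h1 : (0:ℝ) ≤ 1/2 + t := by linarith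
    have h2 : (0:ℝ) ≤ 1/2 - t := by linarith
    positivity
  constructor
  · unfold bernAdvErr bernErr
    apply Finset.sum_congr rfl
    intro z _
    congr 1
    have heq : (∃ δ : Fin d → ℝ, ‖δ‖ ≤ ε ∧ hstar (signMap (emb z.1 + δ)) ≠ z.2) ↔
        hstar z.1 ≠ z.2 := by
      constructor
      · rintro ⟨δ, hδ, hne⟩; rwa [hsign z.1 δ hδ] at hne
      · intro hne
        refine ⟨0, by simpa using hε0, ?_⟩
        rwa [hsign z.1 0 (by simp [hε0])]
    simp only [heq]
  · intro g
    have key : bernAdvErr d θ₁ θₘ t ε (fun x => hstar (signMap x)) =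
        bernErr d θ₁ θₘ t hstar := by
      unfold bernAdvErr bernErr
      apply Finset.sum_congr rfl
      intro z _
      congr 1
      have heq : (∃ δ : Fin d → ℝ, ‖δ‖ ≤ ε ∧ hstar (signMap (emb z.1 + δ)) ≠ z.2) ↔
          hstar z.1 ≠ z.2 := by
        constructor
        · rintro ⟨δ, hδ, hne⟩; rwa [hsign z.1 δ hδ] at hne
        · intro hne
          refine ⟨0, by simpa using hε0, ?_⟩
          rwa [hsign z.1 0 (by simp [hε0])]
      simp only [heq]
    rw [key]
    calc bernErr d θ₁ θₘ t hstar ≤ bernErr d θ₁ θₘ t (fun x => g (emb x)) := hopt _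
      _ ≤ bernAdvErr d θ₁ θₘ t ε g := by
          unfold bernErr bernAdvErr
          apply Finset.sum_le_sum
          intro z _
          apply mul_le_mul_of_nonneg_left _ (hmass z)
          split_ifs with h1 h2 h2
          · exact le_refl 1
          · exact absurd ⟨0, by simpa using hε0, by simpa using h1⟩ h2
          · norm_num
          · exact le_refl 0
end

section
/- Let G = (V,E) be a finite undirected graph with |V| = k, and label its vertices 1,…,k. For a labeling function h : V → {1,…,k}, define the score S(h) = ∑_{i} 𝟙(h(v_i) = i and ∀ u ∈ neighbors(v_i), h(u) = i). Then max_h S(h) equals the maximum cardinality of a distance-3 independent set of G, i.e., a set S ⊆ V such that any two distinct vertices in S have graph distance at least 3. -/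
open scoped Classical

/-- Key uniqueness: for a distance-3 independent set `S`, a vertex `v` can be "claimed"
by at most one `i ∈ S` (where claiming means `v = i` or `i` adjacent to `v`). -/
private lemma claim_unique {k : ℕ} {G : SimpleGraph (Fin k)} {S : Finset (Fin k)}
    (hS : ∀ u ∈ S, ∀ v ∈ S, u ≠ v → ¬G.Reachable u v ∨ 3 ≤ G.dist u v)
    {i j v : Fin k} (hi : i ∈ S) (hj : j ∈ S)
    (hvi : v = i ∨ G.Adj i v) (hvj : v = j ∨ G.Adj j v) : i = j := by
  by_contra hne
  have key : ∃ p : G.Walk i j, p.length ≤ 2 := by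
    rcases hvi with rfl | hvi
    · rcases hvj with rfl | hvj
      · exact absurd rfl hne
      · exact ⟨SimpleGraph.Walk.cons hvj.symm SimpleGraph.Walk.nil, by simp⟩
    · rcases hvj with rfl | hvj
      · exact ⟨SimpleGraph.Walk.cons hvi SimpleGraph.Walk.nil, by simp⟩
      · exact ⟨SimpleGraph.Walk.cons hvi (SimpleGraph.Walk.cons hvj.symm.symm
          SimpleGraph.Walk.nil).reverse, by simp⟩
  obtain ⟨p, hp⟩ := key
  rcases hS i hi j hj hne with hr | hd
  · exact hr ⟨p⟩
  · exact absurd (le_trans hd (le_trans (G.dist_le p) hp)) (by omega)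

open scoped Classical in
/-- The maximum over labelings `h : V → {1,…,k}` of the number of vertices `v_i` such
that `v_i` and all its neighbors are labeled `i` equals the maximum cardinality of a
distance-3 independent set (pairs of distinct chosen vertices are either unreachable or
at graph distance at least 3). -/
theorem max_score_eq_max_distance3_independent_set
    (k : ℕ) (G : SimpleGraph (Fin k)) :
    sSup {n : ℕ | ∃ h : Fin k → Fin k,
        n = (Finset.univ.filter fun i : Fin k =>
              h i = i ∧ ∀ u : Fin k, G.Adj i u → h u = i).card} =
      sSup {n : ℕ | ∃ S : Finset (Fin k),
        (∀ u ∈ S, ∀ v ∈ S, u ≠ v → ¬G.Reachable u v ∨ 3 ≤ G.dist u v) ∧ n = S.card} := by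
  set A := {n : ℕ | ∃ h : Fin k → Fin k,
        n = (Finset.univ.filter fun i : Fin k =>
              h i = i ∧ ∀ u : Fin k, G.Adj i u → h u = i).card} with hA
  set B := {n : ℕ | ∃ S : Finset (Fin k),
        (∀ u ∈ S, ∀ v ∈ S, u ≠ v → ¬G.Reachable u v ∨ 3 ≤ G.dist u v) ∧ n = S.card} with hB
  have hAbdd : BddAbove A := by
    refine ⟨k, ?_⟩
    rintro n ⟨h, rfl⟩
    exact le_trans (Finset.card_filter_le _ _) (by simp)
  have hBbdd : BddAbove B := by
    refine ⟨k, ?_⟩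
    rintro n ⟨S, _, rfl⟩
    exact le_trans (Finset.card_le_univ S) (by simp)
  have hAne : A.Nonempty := ⟨_, id, rfl⟩
  have hBne : B.Nonempty := ⟨0, ∅, by simp⟩
  apply le_antisymm
  · -- every score is achieved by some distance-3 independent set
    refine csSup_le hAne ?_
    rintro n ⟨h, rfl⟩
    refine le_csSup hBbdd ?_
    refine ⟨Finset.univ.filter fun i : Fin k =>
              h i = i ∧ ∀ u : Fin k, G.Adj i u → h u = i, ?_, rfl⟩
    intro u hu v hv huv
    simp only [Finset.mem_filter] at hu hv
    obtain ⟨-, hu1, hu2⟩ := hu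
    obtain ⟨-, hv1, hv2⟩ := hv
    by_contra hcon
    push_neg at hcon
    obtain ⟨hr, hd⟩ := hcon
    obtain ⟨p, hp⟩ := hr.exists_walk_length_eq_dist
    have hdpos : G.dist u v ≠ 0 := by
      rw [SimpleGraph.dist_ne_zero_iff_ne_and_reachable]
      exact ⟨huv, hr⟩
    rcases p with _ | ⟨ha, q⟩
    · exact huv rfl
    · rcases q with _ | ⟨hb, r⟩
      · -- u adjacent to v
        exact huv (by rw [← hu2 v ha, hv1])
      · -- length ≥ 2 walk; since dist < 3, length = 2, so r is nil
        simp only [SimpleGraph.Walk.length_cons] at hp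
        have hr0 : r.length = 0 := by omega
        have := SimpleGraph.Walk.eq_of_length_eq_zero hr0
        subst this
        exact huv (by rw [← hu2 _ ha, hv2 _ hb.symm])
  · -- every distance-3 independent set yields a labeling with that score
    refine csSup_le hBne ?_
    rintro n ⟨S, hS, rfl⟩
    classical
    set h : Fin k → Fin k := fun v =>
      if hv : ∃ i, i ∈ S ∧ (v = i ∨ G.Adj i v) then hv.choose else v with hh
    have hclaim : ∀ v i, i ∈ S → (v = i ∨ G.Adj i v) → h v = i := by
      intro v i hi hvi
      have hex : ∃ j, j ∈ S ∧ (v = j ∨ G.Adj j v) := ⟨i, hi, hvi⟩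
      simp only [hh, dif_pos hex]
      exact claim_unique hS hex.choose_spec.1 hi hex.choose_spec.2 hvi
    refine le_trans ?_ (le_csSup hAbdd ⟨h, rfl⟩)
    have hsub : S ⊆ Finset.univ.filter fun i : Fin k =>
        h i = i ∧ ∀ u : Fin k, G.Adj i u → h u = i := by
      intro i hi
      simp only [Finset.mem_filter, Finset.mem_univ, true_and]
      exact ⟨hclaim i i hi (Or.inl rfl), fun u hu => hclaim u i hi (Or.inr hu)⟩
    exact Finset.card_le_card hsub
end
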